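/- Let n be even and let σ : Fin n → Fin n be a fixed-point-free involution (σ ∘ σ = id and σ i ≠ i for all i). Then (1/2) · Σ_{i : Fin n} H[⟨X i, X (σ i)⟩] is greater than or equal to the minimum, over all j : Fin n and all p : Fin n → Fin n that are arborescences toward j, of the tree cost H[X j] + Σ_{i ≠ j} H[X i | X (p i)]. (That is, the sum rate of any pairwise-matching allocation is at least the minimum arborescence sum rate.) -/

import Mathlib

open MeasureTheory ProbabilityTheory

/-- Shannon entropy (in nats) of a random variable. -/
noncomputable def shEntropy {Ω : Type*} [MeasurableSpace Ω] {S : Type*}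
    (μ : Measure Ω) (X : Ω → S) : ℝ :=
  ∑' x : S, Real.negMulLog (μ (X ⁻¹' {x})).toReal

/-- Conditional Shannon entropy `H[X | Y]`. -/
noncomputable def shCondEntropy {Ω : Type*} [MeasurableSpace Ω] {S T : Type*}
    (μ : Measure Ω) (X : Ω → S) (Y : Ω → T) : ℝ :=
  ∑' y : T, (μ (Y ⁻¹' {y})).toReal * shEntropy (ProbabilityTheory.cond μ (Y ⁻¹' {y})) X

/-- The pairwise property of a rate assignment `R`: for each source `X i` there is an
ordered sequence of sources `X (s 1), …, X (s k)` with `R (s 1) ≥ H[X (s 1)]`,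
`R (s j) ≥ H[X (s j) | X (s (j-1))]` for `2 ≤ j ≤ k`, and `R i ≥ H[X i | X (s k)]`. -/
def PairwiseProperty {Ω S : Type*} [MeasurableSpace Ω] {n : ℕ}
    (μ : Measure Ω) (X : Fin n → Ω → S) (R : Fin n → ℝ) : Prop :=
  ∀ i : Fin n, ∃ (k : ℕ) (s : ℕ → Fin n), 1 ≤ k ∧
    R (s 1) ≥ shEntropy μ (X (s 1)) ∧
    (∀ j : ℕ, 2 ≤ j → j ≤ k → R (s j) ≥ shCondEntropy μ (X (s j)) (X (s (j - 1)))) ∧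
    R i ≥ shCondEntropy μ (X i) (X (s k))

/-- The decoding relation of a rate assignment: `a` can help decode `b` if
`H[X b | X a] ≤ R b`. -/
def decRel {Ω S : Type*} [MeasurableSpace Ω] {n : ℕ}
    (μ : Measure Ω) (X : Fin n → Ω → S) (R : Fin n → ℝ) : Fin n → Fin n → Prop :=
  fun a b => shCondEntropy μ (X b) (X a) ≤ R b

/-- `p` is an arborescence toward the root `j`: iterating `p` from any node reaches `j`. -/
def IsArborescence {n : ℕ} (j : Fin n) (p : Fin n → Fin n) : Prop :=
  ∀ i : Fin n, ∃ m : ℕ, p^[m] i = j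

/-- The tree rate assignment associated with a root `j` and parent map `p`. -/
noncomputable def treeRate {Ω S : Type*} [MeasurableSpace Ω] {n : ℕ}
    (μ : Measure Ω) (X : Fin n → Ω → S) (j : Fin n) (p : Fin n → Fin n) : Fin n → ℝ :=
  fun i => if i = j then shEntropy μ (X j) else shCondEntropy μ (X i) (X (p i))

/-- The cost (sum rate) of the tree rate assignment with root `j` and parent map `p`. -/
noncomputable def treeCost {Ω S : Type*} [MeasurableSpace Ω] {n : ℕ}
    (μ : Measure Ω) (X : Fin n → Ω → S) (j : Fin n) (p : Fin n → Fin n) : ℝ :=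
  shEntropy μ (X j) + ∑ i ∈ Finset.univ.erase j, shCondEntropy μ (X i) (X (p i))


/-!
Order the indices and keep from each pair `{i, σ i}` the smaller element `i < σ i`; the root
`j = 0` is such an element. Hang every kept index directly off the root and every other index
off its partner. Each kept `i` then costs at most `H[X i]` (conditioning reduces entropy) and
its partner costs `H[X (σ i) | X i]`, so by the chain rule the tree costs at most
`∑_{i < σ i} H[⟨X i, X (σ i)⟩]`, which is half of the full sum because the summand is
constant on pairs.
-/

open Finset Real Function

lemma Real.sum_negMulLog_eq_negMulLog_sum_add {ι : Type*} (s : Finset ι) {q : ι → ℝ}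
    (hq : ∀ i ∈ s, 0 ≤ q i) :
    ∑ i ∈ s, negMulLog (q i) =
      negMulLog (∑ i ∈ s, q i) +
        (∑ i ∈ s, q i) * ∑ i ∈ s, negMulLog (q i / ∑ j ∈ s, q j) := by
  set t := ∑ i ∈ s, q i
  by_cases ht : t = 0
  · have hzero := (sum_eq_zero_iff_of_nonneg hq).1 ht
    rw [sum_eq_zero fun i hi => by rw [hzero i hi, negMulLog_zero]]
    simp [ht]
  calc ∑ i ∈ s, negMulLog (q i)
      = ∑ i ∈ s, (q i / t * negMulLog t + t * negMulLog (q i / t)) :=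
        sum_congr rfl fun i _ => by rw [← negMulLog_mul, mul_div_cancel₀ _ ht]
    _ = negMulLog t + t * ∑ i ∈ s, negMulLog (q i / t) := by
        rw [sum_add_distrib, ← sum_mul, ← sum_div, div_self ht, one_mul, mul_sum]

section Entropy

variable {Ω S T : Type*} [MeasurableSpace Ω]

lemma shEntropy_eq_sum {ν : Measure Ω} {X : Ω → S} {F : Finset S} (hF : Set.range X ⊆ F) :
    shEntropy ν X = ∑ x ∈ F, negMulLog (ν (X ⁻¹' {x})).toReal := by
  refine tsum_eq_sum fun x hx => ?_
  simp [Set.preimage_singleton_eq_empty.2 fun h => hx (hF h)]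

lemma shCondEntropy_eq_sum {ν : Measure Ω} {Y : Ω → T} {F : Finset T} (hF : Set.range Y ⊆ F)
    (X : Ω → S) :
    shCondEntropy ν X Y =
      ∑ y ∈ F, (ν (Y ⁻¹' {y})).toReal * shEntropy ν[|Y ⁻¹' {y}] X := by
  refine tsum_eq_sum fun y hy => ?_
  simp [Set.preimage_singleton_eq_empty.2 fun h => hy (hF h)]

lemma shEntropy_prod_comm (ν : Measure Ω) (X : Ω → S) (Y : Ω → T) :
    shEntropy ν (fun ω => (X ω, Y ω)) = shEntropy ν (fun ω => (Y ω, X ω)) := by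
  rw [shEntropy, shEntropy, ← (Equiv.prodComm T S).tsum_eq]
  refine tsum_congr fun ⟨y, x⟩ => ?_
  congr 3
  ext ω
  simp [and_comm]

lemma toReal_cond_apply {A : Set Ω} (hA : MeasurableSet A) (ν : Measure Ω) (B : Set Ω) :
    (ν[B | A]).toReal = (ν (A ∩ B)).toReal / (ν A).toReal := by
  rw [cond_apply hA, ENNReal.toReal_mul, ENNReal.toReal_inv, div_eq_inv_mul]

variable [MeasurableSpace S] [MeasurableSingletonClass S]

lemma sum_toReal_measure_preimage_inter (ν : Measure Ω) [IsFiniteMeasure ν] {X : Ω → S}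
    (hX : Measurable X) {F : Finset S} (hF : Set.range X ⊆ F) (B : Set Ω) :
    ∑ x ∈ F, (ν (X ⁻¹' {x} ∩ B)).toReal = (ν B).toReal := by
  have hcover : X ⁻¹' F = Set.univ := Set.eq_univ_of_forall fun ω => hF ⟨ω, rfl⟩
  simp_rw [← Measure.restrict_apply (hX (measurableSet_singleton _))]
  rw [← ENNReal.toReal_sum fun _ _ => measure_ne_top _ _,
    sum_measure_preimage_singleton F fun x _ => hX (measurableSet_singleton x), hcover,
    Measure.restrict_apply_univ]

theorem shCondEntropy_le_shEntropy (μ : Measure Ω) [IsProbabilityMeasure μ] {X : Ω → S}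
    {Y : Ω → T} (hX : Measurable X) (hfX : (Set.range X).Finite)
    (hfY : (Set.range Y).Finite) :
    shCondEntropy μ Y X ≤ shEntropy μ Y := by
  have hFX : Set.range X ⊆ hfX.toFinset := by simp
  have hFY : Set.range Y ⊆ hfY.toFinset := by simp
  set p : S → ℝ := fun x => (μ (X ⁻¹' {x})).toReal
  set q : S → T → ℝ := fun x y => (μ (X ⁻¹' {x} ∩ Y ⁻¹' {y})).toReal
  have hp : ∑ x ∈ hfX.toFinset, p x = 1 := by
    simpa using sum_toReal_measure_preimage_inter μ hX hFX Set.univ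
  have hmix : ∀ y, ∑ x ∈ hfX.toFinset, p x * (q x y / p x) = (μ (Y ⁻¹' {y})).toReal := by
    intro y
    rw [← sum_toReal_measure_preimage_inter μ hX hFX (Y ⁻¹' {y})]
    refine sum_congr rfl fun x _ => mul_div_cancel_of_imp' fun hpx => ?_
    exact le_antisymm (hpx ▸ measureReal_mono Set.inter_subset_left) ENNReal.toReal_nonneg
  rw [shCondEntropy_eq_sum hFX, shEntropy_eq_sum hFY]
  simp_rw [shEntropy_eq_sum hFY, toReal_cond_apply (hX (measurableSet_singleton _)), mul_sum]
  rw [sum_comm]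
  refine sum_le_sum fun y _ => ?_
  rw [← hmix y]
  simpa only [smul_eq_mul] using concaveOn_negMulLog.le_map_sum
    (fun x _ => ENNReal.toReal_nonneg) hp
    (fun x _ => Set.mem_Ici.2 (div_nonneg ENNReal.toReal_nonneg ENNReal.toReal_nonneg))

variable [MeasurableSpace T] [MeasurableSingletonClass T]

theorem shEntropy_prod (ν : Measure Ω) [IsFiniteMeasure ν] {X : Ω → S} {Y : Ω → T}
    (hX : Measurable X) (hY : Measurable Y) (hfX : (Set.range X).Finite)
    (hfY : (Set.range Y).Finite) :
    shEntropy ν (fun ω => (X ω, Y ω)) = shEntropy ν X + shCondEntropy ν Y X := by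
  have hFX : Set.range X ⊆ hfX.toFinset := by simp
  have hFY : Set.range Y ⊆ hfY.toFinset := by simp
  have hFXY : Set.range (fun ω => (X ω, Y ω)) ⊆ ↑(hfX.toFinset ×ˢ hfY.toFinset) := by
    rintro _ ⟨ω, rfl⟩
    simp
  rw [shEntropy_eq_sum hFXY, shEntropy_eq_sum hFX, shCondEntropy_eq_sum hFX, sum_product,
    ← sum_add_distrib]
  refine sum_congr rfl fun x _ => ?_
  have hfiber : ∀ y,
      (fun ω => (X ω, Y ω)) ⁻¹' {(x, y)} = X ⁻¹' {x} ∩ Y ⁻¹' {y} := by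
    intro y
    ext ω
    simp [Prod.ext_iff]
  have hmarginal : ∑ y ∈ hfY.toFinset, (ν (X ⁻¹' {x} ∩ Y ⁻¹' {y})).toReal =
      (ν (X ⁻¹' {x})).toReal := by
    simpa only [Set.inter_comm] using sum_toReal_measure_preimage_inter ν hY hFY (X ⁻¹' {x})
  simp_rw [hfiber, shEntropy_eq_sum hFY, toReal_cond_apply (hX (measurableSet_singleton x))]
  rw [sum_negMulLog_eq_negMulLog_sum_add _ fun _ _ => ENNReal.toReal_nonneg, hmarginal]

end Entropy

section Pairing

variable {ι M : Type*} [LinearOrder ι] {σ : ι → ι}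

lemma apply_lt_iff_not_lt_apply (hfix : ∀ i, σ i ≠ i) (i : ι) : σ i < i ↔ ¬ i < σ i := by
  rw [not_lt, (hfix i).le_iff_lt]

variable [Fintype ι] [AddCommMonoid M]

lemma sum_filter_not_lt_apply (hσ : Involutive σ) (hfix : ∀ i, σ i ≠ i) (f : ι → M) :
    ∑ i with ¬ i < σ i, f i = ∑ i with i < σ i, f (σ i) := by
  refine sum_nbij' σ σ ?_ ?_ (fun i _ => hσ i) (fun i _ => hσ i) fun i _ => by rw [hσ i]
  · intro i hi
    simp only [mem_filter_univ, hσ i] at hi ⊢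
    exact (apply_lt_iff_not_lt_apply hfix i).2 hi
  · intro i hi
    simp only [mem_filter_univ, hσ i] at hi ⊢
    exact hi.asymm

lemma sum_eq_two_nsmul_sum_filter_lt (hσ : Involutive σ) (hfix : ∀ i, σ i ≠ i) {f : ι → M}
    (hf : ∀ i, f (σ i) = f i) :
    ∑ i, f i = 2 • ∑ i with i < σ i, f i := by
  rw [← sum_filter_add_sum_filter_not univ (fun i => i < σ i), sum_filter_not_lt_apply hσ hfix,
    two_nsmul]
  simp only [hf]

end Pairing

lemma treeCost_eq_sum_treeRate {Ω S : Type*} [MeasurableSpace Ω] {n : ℕ} (μ : Measure Ω)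
    (X : Fin n → Ω → S) (j : Fin n) (p : Fin n → Fin n) :
    treeCost μ X j p = ∑ i, treeRate μ X j p i := by
  rw [treeCost, ← add_sum_erase _ _ (mem_univ j)]
  congr 1
  · simp [treeRate]
  · exact sum_congr rfl fun i hi => by simp [treeRate, ne_of_mem_erase hi]

def pairingParent {ι : Type*} [LT ι] [DecidableLT ι] (σ : ι → ι) (j : ι) (i : ι) : ι :=
  if i < σ i then j else σ i

section PairingTree

variable {n : ℕ} {σ : Fin n → Fin n}

lemma isArborescence_pairingParent (hσ : Involutive σ) (hfix : ∀ i, σ i ≠ i) (j : Fin n) :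
    IsArborescence j (pairingParent σ j) := by
  intro i
  by_cases hi : i < σ i
  · exact ⟨1, by simp [pairingParent, hi]⟩
  · have hpartner : σ i < σ (σ i) := by
      rw [hσ i]
      exact (apply_lt_iff_not_lt_apply hfix i).2 hi
    exact ⟨2, by simp [pairingParent, hi, hpartner]⟩

variable {Ω S : Type*} [MeasurableSpace Ω] [MeasurableSpace S] [MeasurableSingletonClass S]

theorem treeCost_pairingParent_le (μ : Measure Ω) [IsProbabilityMeasure μ]
    {X : Fin n → Ω → S} (hX : ∀ i, Measurable (X i)) (hfin : ∀ i, (Set.range (X i)).Finite)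
    (hσ : Involutive σ) (hfix : ∀ i, σ i ≠ i) {j : Fin n} (hj : j < σ j) :
    treeCost μ X j (pairingParent σ j) ≤
      ∑ i with i < σ i, shEntropy μ (fun ω => (X i ω, X (σ i) ω)) := by
  set rate := treeRate μ X j (pairingParent σ j)
  have hkept : ∀ i ∈ ({i | i < σ i} : Finset (Fin n)), rate i ≤ shEntropy μ (X i) := by
    intro i hi
    by_cases hij : i = j
    · simp [rate, treeRate, hij]
    · simp only [rate, treeRate, hij, pairingParent, (mem_filter_univ i).1 hi, if_true, if_false]
      exact shCondEntropy_le_shEntropy μ (hX j) (hfin j) (hfin i)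
  have hpartner : ∀ i ∈ ({i | ¬ i < σ i} : Finset (Fin n)),
      rate i = shCondEntropy μ (X i) (X (σ i)) := by
    intro i hi
    have hi := (mem_filter_univ i).1 hi
    have hij : i ≠ j := by
      rintro rfl
      exact hi hj
    simp [rate, treeRate, hij, pairingParent, hi]
  calc treeCost μ X j (pairingParent σ j)
      = ∑ i with i < σ i, rate i + ∑ i with ¬ i < σ i, rate i := by
        rw [treeCost_eq_sum_treeRate, sum_filter_add_sum_filter_not]
    _ ≤ ∑ i with i < σ i, shEntropy μ (X i) +
          ∑ i with i < σ i, shCondEntropy μ (X (σ i)) (X i) := by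
        rw [sum_congr rfl hpartner, sum_filter_not_lt_apply hσ hfix]
        simp only [hσ _]
        gcongr with i hi
        exact hkept i hi
    _ = ∑ i with i < σ i, shEntropy μ (fun ω => (X i ω, X (σ i) ω)) := by
        rw [← sum_add_distrib]
        exact sum_congr rfl fun i _ => (shEntropy_prod μ (hX i) (hX (σ i)) (hfin i) (hfin _)).symm

end PairingTree

theorem matching_sumRate_ge_min_arborescence_general
    {Ω S : Type*} [MeasurableSpace Ω] [MeasurableSpace S] [MeasurableSingletonClass S]
    (μ : Measure Ω) [IsProbabilityMeasure μ] {n : ℕ} (hn : 1 ≤ n)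
    (X : Fin n → Ω → S) (hX : ∀ i, Measurable (X i))
    (hfin : ∀ i, (Set.range (X i)).Finite)
    (σ : Fin n → Fin n) (hσ : σ ∘ σ = id) (hσ' : ∀ i, σ i ≠ i) :
    ∃ m : ℝ,
      IsLeast {c : ℝ | ∃ (j : Fin n) (p : Fin n → Fin n),
        IsArborescence j p ∧ c = treeCost μ X j p} m ∧
      m ≤ (1 / 2) * ∑ i : Fin n, shEntropy μ (fun ω => (X i ω, X (σ i) ω)) := by
  have hinv : Involutive σ := congrFun hσ
  set j : Fin n := ⟨0, hn⟩
  have hj : j < σ j := lt_of_le_of_ne (Nat.zero_le _) (hσ' j).symm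
  set costs := {c : ℝ | ∃ (j : Fin n) (p : Fin n → Fin n),
    IsArborescence j p ∧ c = treeCost μ X j p}
  have hfinite : costs.Finite :=
    (Set.finite_range fun q : Fin n × (Fin n → Fin n) => treeCost μ X q.1 q.2).subset
      fun _ ⟨j, p, _, hc⟩ => ⟨(j, p), hc.symm⟩
  have hmem : treeCost μ X j (pairingParent σ j) ∈ costs :=
    ⟨j, _, isArborescence_pairingParent hinv hσ' j, rfl⟩
  obtain ⟨m, hm, hmin⟩ := costs.exists_min_image id hfinite ⟨_, hmem⟩
  refine ⟨m, ⟨hm, hmin⟩, ?_⟩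
  have hsymm : ∀ i, shEntropy μ (fun ω => (X (σ i) ω, X (σ (σ i)) ω)) =
      shEntropy μ (fun ω => (X i ω, X (σ i) ω)) := fun i => by
    rw [hinv i, shEntropy_prod_comm]
  calc m ≤ treeCost μ X j (pairingParent σ j) := hmin _ hmem
    _ ≤ ∑ i with i < σ i, shEntropy μ (fun ω => (X i ω, X (σ i) ω)) :=
        treeCost_pairingParent_le μ hX hfin hinv hσ' hj
    _ = (1 / 2) * ∑ i : Fin n, shEntropy μ (fun ω => (X i ω, X (σ i) ω)) := by
        rw [sum_eq_two_nsmul_sum_filter_lt hinv hσ' hsymm, two_nsmul]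
        ring

/-- The sum rate of any pairwise matching allocation is at least the minimum
arborescence sum rate. -/
theorem matching_sumRate_ge_min_arborescence
    {Ω S : Type*} [MeasurableSpace Ω] [MeasurableSpace S] [MeasurableSingletonClass S]
    (μ : Measure Ω) [IsProbabilityMeasure μ] {n : ℕ} (hn : 1 ≤ n) (hneven : Even n)
    (X : Fin n → Ω → S) (hX : ∀ i, Measurable (X i))
    (hfin : ∀ i, (Set.range (X i)).Finite)
    (σ : Fin n → Fin n) (hσ : σ ∘ σ = id) (hσ' : ∀ i, σ i ≠ i) :
    ∃ m : ℝ,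
      IsLeast {c : ℝ | ∃ (j : Fin n) (p : Fin n → Fin n),
        IsArborescence j p ∧ c = treeCost μ X j p} m ∧
      m ≤ (1 / 2) * ∑ i : Fin n, shEntropy μ (fun ω => (X i ω, X (σ i) ω)) :=
  matching_sumRate_ge_min_arborescence_general μ hn X hX hfin σ hσ hσ'
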